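/- arXiv:2010.15418 — 2 statements merged into one kernel-verified Lean document; each statement's English description precedes it below -/
import Mathlib

section
/- Let n ≥ 2, σ: E(K_{4n}) → {-1,1} with σ(E(K_{4n})) = 0, and suppose σ(M) ≠ 0 for every perfect matching M. If M is a perfect matching minimizing |σ(M)| with σ(M) > 0, then σ(M) = 2, so M contains exactly n+1 edges with label +1 and n−1 edges with label −1. -/
open Finset

noncomputable def sumE {m : ℕ} (σ : Sym2 (Fin m) → ℤ) (S : Set (Sym2 (Fin m))) : ℤ :=
  ∑ e ∈ S.toFinite.toFinset, σ e

def Kc (m : ℕ) : SimpleGraph (Fin m) := ⊤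

/-
A perfect matching of the complete graph is a fixed-point-free involution `f`. Exchanging the
matched pairs `{x, f x}, {y, f y}` for `{x, f y}, {y, f x}` changes the perfect matching's
weight by `swapGain σ f x y`, which is at least `-4` for a `±1` signing. Summed over all
admissible ordered pairs `(x, y)` these gains total `4 σ(E) - 4 (m - 1) σ(M)` on `m` vertices.
When `σ(E) = 0` and `σ(M) > 0` some swap therefore lowers the weight, by at most `4`, so a perfect
matching with least `|σ(M)|` and `σ(M) > 0` has `σ(M) ≤ 3`. Since `σ(M) = P - Q` with
`P + Q = 2n`, where `P` and `Q` count its `+1` and `-1` edges, the weight is even, so `σ(M) = 2`.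
-/

open Function

namespace SimpleGraph

variable {V : Type*}

theorem sum_sum_adj_eq_two_nsmul [Fintype V] {β : Type*} [AddCommMonoid β] (G : SimpleGraph V)
    [DecidableRel G.Adj] (w : Sym2 V → β) :
    ∑ x, ∑ y with G.Adj x y, w s(x, y) = 2 • ∑ e ∈ G.edgeSet.toFinite.toFinset, w e := by
  classical
  have hdarts : ∑ x, ∑ y with G.Adj x y, w s(x, y) = ∑ d : G.Dart, w d.edge := by
    simp_rw [sum_filter, ← Fintype.sum_prod_type', ← sum_filter]
    refine sum_bij' (fun p hp ↦ ⟨p, (mem_filter.1 hp).2⟩) (fun d _ ↦ d.toProd)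
      ?_ ?_ ?_ ?_ ?_ <;> simp
  rw [hdarts, ← sum_fiberwise_of_maps_to (g := Dart.edge) (t := G.edgeSet.toFinite.toFinset)
    (by simp), smul_sum]
  refine sum_congr rfl fun e he ↦ ?_
  rw [sum_congr rfl fun d hd ↦ by rw [(mem_filter.1 hd).2], sum_const,
    G.dart_edge_fiber_card e (by simpa using he)]

namespace Subgraph

variable {G : SimpleGraph V}

theorem IsPerfectMatching.exists_involutive {M : G.Subgraph} (hM : M.IsPerfectMatching) :
    ∃ f : V → V, Involutive f ∧ ∀ v w, M.Adj v w ↔ f v = w := by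
  choose f hf huniq using isPerfectMatching_iff.1 hM
  have hadj : ∀ v w, M.Adj v w ↔ f v = w :=
    fun v w ↦ ⟨fun h ↦ (huniq v w h).symm, by rintro rfl; exact hf v⟩
  exact ⟨f, fun v ↦ (hadj _ _).1 ((hf v).symm), hadj⟩

def ofInvolutive (f : V → V) (hf : Involutive f) (hG : ∀ v, G.Adj v (f v)) :
    G.Subgraph where
  verts := Set.univ
  Adj v w := f v = w
  adj_sub := by rintro v _ rfl; exact hG v
  edge_vert _ := trivial
  symm := ⟨by rintro v _ rfl; exact hf v⟩

theorem isPerfectMatching_ofInvolutive (f : V → V) (hf : Involutive f)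
    (hG : ∀ v, G.Adj v (f v)) : (ofInvolutive f hf hG).IsPerfectMatching :=
  isPerfectMatching_iff.2 fun v ↦ ⟨f v, rfl, fun _ h ↦ Eq.symm h⟩

theorem sum_eq_two_nsmul_of_adj_iff [Fintype V] {β : Type*} [AddCommMonoid β]
    {M : G.Subgraph} {f : V → V} (hMf : ∀ v w, M.Adj v w ↔ f v = w) (w : Sym2 V → β) :
    ∑ v, w s(v, f v) = 2 • ∑ e ∈ M.edgeSet.toFinite.toFinset, w e := by
  classical
  have := M.spanningCoe.sum_sum_adj_eq_two_nsmul w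
  simp only [Subgraph.spanningCoe_adj, hMf, sum_filter, sum_ite_eq, mem_univ, if_true] at this
  simpa only [edgeSet_spanningCoe] using this

theorem IsPerfectMatching.two_mul_ncard_edgeSet [Fintype V] {M : G.Subgraph}
    (hM : M.IsPerfectMatching) : 2 * M.edgeSet.ncard = Fintype.card V := by
  obtain ⟨f, -, hMf⟩ := hM.exists_involutive
  simpa [Set.ncard_eq_toFinset_card M.edgeSet, eq_comm] using
    sum_eq_two_nsmul_of_adj_iff hMf fun _ ↦ (1 : ℕ)

end Subgraph

end SimpleGraph

section Sign

variable {α : Type*} {S : Set α} {σ : α → ℤ}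

theorem Set.Finite.ncard_sep (hS : S.Finite) (p : α → Prop) [DecidablePred p] :
    {e ∈ S | p e}.ncard = #{e ∈ hS.toFinset | p e} := by
  rw [← Set.ncard_coe_finset]
  congr
  ext
  simp

theorem Set.Finite.sum_toFinset_eq_ncard_sub_ncard (hS : S.Finite)
    (hσ : ∀ e ∈ S, σ e = 1 ∨ σ e = -1) :
    ∑ e ∈ hS.toFinset, σ e = {e ∈ S | σ e = 1}.ncard - {e ∈ S | σ e = -1}.ncard := by
  have hsplit : ∀ e ∈ hS.toFinset,
      σ e = (if σ e = 1 then 1 else 0) - (if σ e = -1 then 1 else 0) := by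
    intro e he
    rcases hσ e (hS.mem_toFinset.1 he) with h | h <;> simp [h]
  rw [sum_congr rfl hsplit, sum_sub_distrib, sum_boole, sum_boole, hS.ncard_sep, hS.ncard_sep]

theorem Set.Finite.ncard_sep_eq_one_add_ncard_sep_eq_neg_one (hS : S.Finite)
    (hσ : ∀ e ∈ S, σ e = 1 ∨ σ e = -1) :
    {e ∈ S | σ e = 1}.ncard + {e ∈ S | σ e = -1}.ncard = S.ncard := by
  rw [← Set.ncard_union_eq _ (hS.subset (Set.sep_subset S _))
    (hS.subset (Set.sep_subset S _))]
  · congr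
    ext e
    constructor
    · rintro (⟨he, -⟩ | ⟨he, -⟩) <;> exact he
    · intro he
      rcases hσ e he with h | h
      exacts [Or.inl ⟨he, h⟩, Or.inr ⟨he, h⟩]
  · refine Set.disjoint_left.2 fun e h1 h2 ↦ ?_
    have := h1.2.symm.trans h2.2
    omega

end Sign

section Swap

variable {V : Type*}

def swapGain (σ : Sym2 V → ℤ) (f : V → V) (x y : V) : ℤ :=
  σ s(x, f y) + σ s(y, f x) - σ s(x, f x) - σ s(y, f y)

variable {f : V → V}

theorem neg_four_le_swapGain {σ : Sym2 V → ℤ}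
    (hσ : ∀ u v, u ≠ v → σ s(u, v) = 1 ∨ σ s(u, v) = -1) (hf : Involutive f)
    (hfix : ∀ v, f v ≠ v) {x y : V} (hyf : y ≠ f x) : -4 ≤ swapGain σ f x y := by
  have hbound : ∀ u v, u ≠ v → -1 ≤ σ s(u, v) ∧ σ s(u, v) ≤ 1 := fun u v huv ↦ by
    rcases hσ u v huv with h | h <;> rw [h] <;> norm_num
  have hxfy : x ≠ f y := fun h ↦ hyf (by rw [h, hf])
  rw [swapGain]
  linarith [(hbound x (f y) hxfy).1, (hbound y (f x) hyf).1, (hbound x (f x) (hfix x).symm).2,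
    (hbound y (f y) (hfix y).symm).2]

variable [DecidableEq V]

theorem Function.Involutive.swap_conj (hf : Involutive f) (x y : V) :
    Involutive (Equiv.swap x y ∘ f ∘ Equiv.swap x y) := fun v ↦ by simp [hf _]

theorem swap_conj_apply_ne (hfix : ∀ v, f v ≠ v) (x y v : V) :
    (Equiv.swap x y ∘ f ∘ Equiv.swap x y) v ≠ v := fun h ↦
  hfix (Equiv.swap x y v) (by simpa [Equiv.swap_apply_eq_iff] using h)

theorem sum_swap_conj [Fintype V] (σ : Sym2 V → ℤ) (hf : Involutive f) (hfix : ∀ v, f v ≠ v)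
    {x y : V} (hyx : y ≠ x) (hyf : y ≠ f x) :
    ∑ v, σ s(v, (Equiv.swap x y ∘ f ∘ Equiv.swap x y) v) =
      ∑ v, σ s(v, f v) + 2 * swapGain σ f x y := by
  set g := Equiv.swap x y ∘ f ∘ Equiv.swap x y
  have hfy : f y ≠ x := fun h ↦ hyf (by rw [← h, hf])
  have hfxy : f x ≠ f y := fun h ↦ hyx (hf.injective h).symm
  have hgx : g x = f y := by simp [g, Equiv.swap_apply_of_ne_of_ne hfy (hfix y)]
  have hgy : g y = f x := by simp [g, Equiv.swap_apply_of_ne_of_ne (hfix x) hyf.symm]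
  have hgfx : g (f x) = y := by simp [g, Equiv.swap_apply_of_ne_of_ne (hfix x) hyf.symm, hf x]
  have hgfy : g (f y) = x := by simp [g, Equiv.swap_apply_of_ne_of_ne hfy (hfix y), hf y]
  have hg : ∀ v ∉ ({x, y, f x, f y} : Finset V), g v = f v := by
    intro v hv
    simp only [mem_insert, mem_singleton, not_or] at hv
    obtain ⟨hvx, hvy, hvfx, hvfy⟩ := hv
    have : f v ≠ x := fun h ↦ hvfx (by rw [← h, hf])
    have : f v ≠ y := fun h ↦ hvfy (by rw [← h, hf])
    simp [g, Equiv.swap_apply_of_ne_of_ne hvx hvy, Equiv.swap_apply_of_ne_of_ne ‹f v ≠ x› this]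
  rw [← sub_eq_iff_eq_add', ← sum_sub_distrib,
    ← sum_subset (subset_univ {x, y, f x, f y}) fun v _ hv ↦ by rw [hg v hv, sub_self],
    sum_insert (by simp [hyx.symm, (hfix x).symm, hfy.symm]),
    sum_insert (by simp [hyf, (hfix y).symm]), sum_pair hfxy,
    hgx, hgy, hgfx, hgfy, hf x, hf y, swapGain, Sym2.eq_swap (a := f x), Sym2.eq_swap (a := f y),
    Sym2.eq_swap (a := f x) (b := x), Sym2.eq_swap (a := f y) (b := y)]
  ring

theorem sum_sum_swapGain [Fintype V] (σ : Sym2 V → ℤ) (hf : Involutive f)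
    (hfix : ∀ v, f v ≠ v) :
    ∑ x, ∑ y ∈ univ \ {x, f x}, swapGain σ f x y =
      2 * ∑ x, ∑ y with x ≠ y, σ s(x, y) - 2 * (Fintype.card V - 1) * ∑ v, σ s(v, f v) := by
  set F : V → ℤ := fun x ↦ ∑ y, σ s(x, y)
  have hrow : ∀ x, ∑ y ∈ univ \ {x, f x}, swapGain σ f x y =
      F x + F (f x) - Fintype.card V * σ s(x, f x) - ∑ v, σ s(v, f v) -
        (σ s(x, x) + σ s(f x, f x) - 2 * σ s(x, f x)) := by
    intro x
    have hcol : ∑ y, σ s(x, f y) = F x := Equiv.sum_comp hf.toPerm fun y ↦ σ s(x, y)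
    rw [sum_sdiff_eq_sub (subset_univ _), sum_pair (hfix x).symm]
    simp only [swapGain, sum_add_distrib, sum_sub_distrib, sum_const, card_univ, nsmul_eq_mul,
      hcol, hf x, F, Sym2.eq_swap (b := f x)]
    ring
  have hoff : ∀ x, ∑ y with x ≠ y, σ s(x, y) = F x - σ s(x, x) := fun x ↦ by
    rw [filter_ne, sum_erase_eq_sub (mem_univ x)]
  have hF : ∑ x, F (f x) = ∑ x, F x := Equiv.sum_comp hf.toPerm F
  have hdiag : ∑ x, σ s(f x, f x) = ∑ x, σ s(x, x) := Equiv.sum_comp hf.toPerm fun v ↦ σ s(v, v)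
  simp only [sum_congr rfl fun x _ ↦ hrow x, sum_congr rfl fun x _ ↦ hoff x, sum_add_distrib,
    sum_sub_distrib, sum_const, card_univ, nsmul_eq_mul, ← mul_sum, hF, hdiag]
  ring

theorem exists_swapGain_neg [Fintype V] (σ : Sym2 V → ℤ) (hf : Involutive f)
    (hfix : ∀ v, f v ≠ v)
    (havg : ∑ x, ∑ y with x ≠ y, σ s(x, y) < (Fintype.card V - 1) * ∑ v, σ s(v, f v)) :
    ∃ x y, y ≠ x ∧ y ≠ f x ∧ swapGain σ f x y < 0 := by
  have hneg : ∑ x, ∑ y ∈ univ \ {x, f x}, swapGain σ f x y <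
      ∑ x : V, ∑ _y ∈ univ \ {x, f x}, 0 := by
    rw [sum_sum_swapGain σ hf hfix]
    simp only [sum_const_zero]
    linarith
  obtain ⟨x, -, hx⟩ := exists_lt_of_sum_lt hneg
  obtain ⟨y, hy, hxy⟩ := exists_lt_of_sum_lt hx
  simp only [mem_sdiff, mem_univ, mem_insert, mem_singleton, not_or, true_and] at hy
  exact ⟨x, y, hy.1, hy.2, hxy⟩

end Swap

theorem SimpleGraph.Subgraph.IsPerfectMatching.exists_sum_lt {V : Type*} [Fintype V]
    [DecidableEq V] {σ : Sym2 V → ℤ} (hσ : ∀ e ∈ (⊤ : SimpleGraph V).edgeSet, σ e = 1 ∨ σ e = -1)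
    {M : (⊤ : SimpleGraph V).Subgraph} (hM : M.IsPerfectMatching)
    (havg : ∑ e ∈ (⊤ : SimpleGraph V).edgeSet.toFinite.toFinset, σ e <
      (Fintype.card V - 1) * ∑ e ∈ M.edgeSet.toFinite.toFinset, σ e) :
    ∃ N : (⊤ : SimpleGraph V).Subgraph, N.IsPerfectMatching ∧
      ∑ e ∈ M.edgeSet.toFinite.toFinset, σ e - 4 ≤ ∑ e ∈ N.edgeSet.toFinite.toFinset, σ e ∧
      ∑ e ∈ N.edgeSet.toFinite.toFinset, σ e < ∑ e ∈ M.edgeSet.toFinite.toFinset, σ e := by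
  obtain ⟨f, hf, hMf⟩ := hM.exists_involutive
  have hfix : ∀ v, f v ≠ v := fun v ↦ ((hMf v (f v)).2 rfl).ne.symm
  have hM2 := sum_eq_two_nsmul_of_adj_iff hMf σ
  have hE2 : ∑ x, ∑ y with x ≠ y, σ s(x, y) = _ :=
    (⊤ : SimpleGraph V).sum_sum_adj_eq_two_nsmul σ
  obtain ⟨x, y, hyx, hyf, hneg⟩ := exists_swapGain_neg σ hf hfix (by
    rw [hM2, hE2, two_nsmul, two_nsmul]
    linarith)
  have hlow := neg_four_le_swapGain (fun u v huv ↦ hσ s(u, v) huv) hf hfix hyf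
  let N := ofInvolutive (G := ⊤) _ (hf.swap_conj x y) fun v ↦ (swap_conj_apply_ne hfix x y v).symm
  have hN2 := sum_eq_two_nsmul_of_adj_iff (M := N) (fun _ _ ↦ Iff.rfl) σ
  have hgain := sum_swap_conj σ hf hfix hyx hyf
  rw [two_nsmul] at hM2 hN2
  exact ⟨N, isPerfectMatching_ofInvolutive _ _ _, by linarith, by linarith⟩

theorem stmt6_general (n : ℕ) (σ : Sym2 (Fin (4*n)) → ℤ)
    (hσ : ∀ e ∈ (Kc (4*n)).edgeSet, σ e = 1 ∨ σ e = -1)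
    (hsum : sumE σ (Kc (4*n)).edgeSet = 0)
    (M : (Kc (4*n)).Subgraph) (hM : M.IsPerfectMatching)
    (hmin : ∀ N : (Kc (4*n)).Subgraph, N.IsPerfectMatching →
      |sumE σ M.edgeSet| ≤ |sumE σ N.edgeSet|)
    (hpos : 0 < sumE σ M.edgeSet) :
    sumE σ M.edgeSet = 2 ∧
    {e ∈ M.edgeSet | σ e = 1}.ncard = n + 1 ∧
    {e ∈ M.edgeSet | σ e = -1}.ncard = n - 1 := by
  have hMσ : ∀ e ∈ M.edgeSet, σ e = 1 ∨ σ e = -1 := fun e he ↦ hσ e (M.edgeSet_subset he)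
  have hcard := hM.two_mul_ncard_edgeSet
  have hdiff := M.edgeSet.toFinite.sum_toFinset_eq_ncard_sub_ncard hMσ
  have htotal := M.edgeSet.toFinite.ncard_sep_eq_one_add_ncard_sep_eq_neg_one hMσ
  rw [Fintype.card_fin] at hcard
  change sumE σ M.edgeSet = _ at hdiff
  have hle : sumE σ M.edgeSet ≤ 3 := by
    by_contra! h4
    obtain ⟨N, hN, hlow, hlt⟩ : ∃ N : (Kc (4*n)).Subgraph, N.IsPerfectMatching ∧
        sumE σ M.edgeSet - 4 ≤ sumE σ N.edgeSet ∧ sumE σ N.edgeSet < sumE σ M.edgeSet :=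
      hM.exists_sum_lt hσ (by
      change sumE σ (Kc (4*n)).edgeSet < _ * sumE σ M.edgeSet
      rw [hsum, Fintype.card_fin]
      exact mul_pos (by omega) hpos)
    have hNM := hmin N hN
    rw [abs_of_pos hpos, abs_of_nonneg (by omega)] at hNM
    omega
  omega

theorem stmt6 (n : ℕ) (hn : 2 ≤ n) (σ : Sym2 (Fin (4*n)) → ℤ)
    (hσ : ∀ e ∈ (Kc (4*n)).edgeSet, σ e = 1 ∨ σ e = -1)
    (hsum : sumE σ (Kc (4*n)).edgeSet = 0)
    (hno : ∀ N : (Kc (4*n)).Subgraph, N.IsPerfectMatching → sumE σ N.edgeSet ≠ 0)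
    (M : (Kc (4*n)).Subgraph) (hM : M.IsPerfectMatching)
    (hmin : ∀ N : (Kc (4*n)).Subgraph, N.IsPerfectMatching →
      |sumE σ M.edgeSet| ≤ |sumE σ N.edgeSet|)
    (hpos : 0 < sumE σ M.edgeSet) :
    sumE σ M.edgeSet = 2 ∧
    {e ∈ M.edgeSet | σ e = 1}.ncard = n + 1 ∧
    {e ∈ M.edgeSet | σ e = -1}.ncard = n - 1 :=
  stmt6_general n σ hσ hsum M hM hmin hpos
end

section
/- Let n ≥ 2, σ: E(K_{4n}) → {-1,1} with σ(E(K_{4n})) = 0, M a perfect matching minimizing |σ(M)| with σ(M) = 2, and suppose the set of vertices covered by edges of M labeled +1 induces no edge labeled −1. Then the number of edges labeled +1 in K_{4n} is at least (4n−1)(n+1), contradicting that it equals 4n² − n; hence some edge labeled −1 joins two +1-edges of M. -/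
open Finset

/-!
Let `P` and `Q` be the edges of `M` with sign `+1` and `-1`. From `σ(M) = 2` we get
`|P| = n + 1`, `|Q| = n - 1`, and from `σ(K_{4n}) = 0` exactly `n (4n - 1)` plus-edges.
For `ab ∈ P` and `cd ∈ Q`, trading them for `ac, bd` gives a perfect matching of sign
`2 + σ(ac) + σ(bd)`, which is not `0`, so `ac` or `bd` is a plus-edge; likewise `ad` or `bc`.
Hence at least two plus-edges join every edge of `P` to every edge of `Q`. If moreover
the `2n + 2` vertices covered by `P` span only plus-edges, there are at least
`(n + 1)(2n + 1) + 2 (n + 1)(n - 1) = (4n - 1)(n + 1) > n (4n - 1)` plus-edges.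
-/

open SimpleGraph

namespace SimpleGraph.Subgraph

variable {V W : Type*} {G : SimpleGraph V} {G' : SimpleGraph W} {M : G.Subgraph}

theorem IsMatching.eq_of_mem_edgeSet (hM : M.IsMatching) {e f : Sym2 V} {v : V}
    (he : e ∈ M.edgeSet) (hf : f ∈ M.edgeSet) (hve : v ∈ e) (hvf : v ∈ f) : e = f := by
  obtain ⟨w, rfl⟩ := Sym2.mem_iff_exists.mp hve
  obtain ⟨w', rfl⟩ := Sym2.mem_iff_exists.mp hvf
  rw [hM.eq_of_adj_left (M.mem_edgeSet.mp he) (M.mem_edgeSet.mp hf)]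

theorem IsMatching.disjoint_toFinset [DecidableEq V] (hM : M.IsMatching) {e f : Sym2 V}
    (he : e ∈ M.edgeSet) (hf : f ∈ M.edgeSet) (hne : e ≠ f) :
    Disjoint e.toFinset f.toFinset :=
  Finset.disjoint_left.mpr fun _ hve hvf =>
    hne (hM.eq_of_mem_edgeSet he hf (Sym2.mem_toFinset.mp hve) (Sym2.mem_toFinset.mp hvf))

theorem IsMatching.card_biUnion_toFinset [DecidableEq V] (hM : M.IsMatching)
    {P : Finset (Sym2 V)} (hP : ↑P ⊆ M.edgeSet) : #(P.biUnion Sym2.toFinset) = 2 * #P := by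
  rw [card_biUnion fun e he f hf hne => hM.disjoint_toFinset (hP he) (hP hf) hne,
    sum_congr rfl fun e he => Sym2.card_toFinset_of_not_isDiag e
      (G.not_isDiag_of_mem_edgeSet (M.edgeSet_subset (hP he))), sum_const, smul_eq_mul, mul_comm]

theorem IsMatching.disjoint_biUnion_toFinset [DecidableEq V] (hM : M.IsMatching)
    {P Q : Finset (Sym2 V)} (hP : ↑P ⊆ M.edgeSet) (hQ : ↑Q ⊆ M.edgeSet) (hPQ : Disjoint P Q) :
    Disjoint (P.biUnion Sym2.toFinset) (Q.biUnion Sym2.toFinset) := by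
  refine Finset.disjoint_left.mpr fun v hvP hvQ => ?_
  obtain ⟨e, he, hve⟩ := mem_biUnion.mp hvP
  obtain ⟨f, hf, hvf⟩ := mem_biUnion.mp hvQ
  have hef := hM.eq_of_mem_edgeSet (hP he) (hQ hf) (Sym2.mem_toFinset.mp hve)
    (Sym2.mem_toFinset.mp hvf)
  exact Finset.disjoint_left.mp hPQ he (hef ▸ hf)

theorem IsPerfectMatching.two_mul_card_edgeSet [Fintype V] [DecidableEq V]
    (hM : M.IsPerfectMatching) : 2 * #M.edgeSet.toFinite.toFinset = Fintype.card V := by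
  rw [← hM.1.card_biUnion_toFinset (by simp), ← card_univ]
  congr 1
  refine eq_univ_of_forall fun v => ?_
  obtain ⟨w, hvw, -⟩ := isPerfectMatching_iff.mp hM v
  exact mem_biUnion.mpr ⟨s(v, w), by simpa using hvw, by simp⟩

theorem IsPerfectMatching.map_iso (hM : M.IsPerfectMatching) (f : G ≃g G') :
    (M.map f.toHom).IsPerfectMatching :=
  ⟨(Iso.isMatching_map f).mpr hM.1, fun v => ⟨f.symm v, hM.2 _, by simp⟩⟩

/-- The transposition `(b c)` turns `ab, cd` into `ac, bd` and fixes every other edge. -/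
theorem IsMatching.sum_map_swap {β : Type*} [AddCommGroup β] [DecidableEq V] (σ : Sym2 V → β)
    (hM : M.IsMatching) {E : Finset (Sym2 V)} (hE : ↑E ⊆ M.edgeSet) {a b c d : V}
    (hab : s(a, b) ∈ E) (hcd : s(c, d) ∈ E) (hne : s(a, b) ≠ s(c, d)) :
    ∑ e ∈ E, σ (Sym2.map (Equiv.swap b c) e) =
      ∑ e ∈ E, σ e - σ s(a, b) - σ s(c, d) + σ s(a, c) + σ s(b, d) := by
  have hAB : a ≠ b := by simpa using G.not_isDiag_of_mem_edgeSet (M.edgeSet_subset (hE hab))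
  have hCD : c ≠ d := by simpa using G.not_isDiag_of_mem_edgeSet (M.edgeSet_subset (hE hcd))
  have hac : a ≠ c := fun h => hne (hM.eq_of_mem_edgeSet (hE hab) (hE hcd) (v := a) (by simp)
    (by simp [h]))
  have hdb : d ≠ b := fun h => hne (hM.eq_of_mem_edgeSet (hE hab) (hE hcd) (v := b) (by simp)
    (by simp [h]))
  have hfix : ∀ e ∈ E, e ≠ s(a, b) ∧ e ≠ s(c, d) →
      σ (Sym2.map (Equiv.swap b c) e) - σ e = 0 := by
    rintro e he ⟨heab, hecd⟩
    rw [sub_eq_zero, Sym2.map_congr (g := id), Sym2.map_id, id]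
    intro x hx
    refine Equiv.swap_apply_of_ne_of_ne ?_ ?_
    · rintro rfl
      exact heab (hM.eq_of_mem_edgeSet (hE he) (hE hab) hx (by simp))
    · rintro rfl
      exact hecd (hM.eq_of_mem_edgeSet (hE he) (hE hcd) hx (by simp))
  have hsum := sum_eq_add_of_mem (f := fun e => σ (Sym2.map (Equiv.swap b c) e) - σ e) _ _
    hab hcd hne hfix
  simp only [Sym2.map_mk, Equiv.swap_apply_left, Equiv.swap_apply_right,
    Equiv.swap_apply_of_ne_of_ne hAB hac, Equiv.swap_apply_of_ne_of_ne hdb hCD.symm] at hsum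
  rw [sum_sub_distrib, sub_eq_iff_eq_add'] at hsum
  rw [hsum]
  abel

end SimpleGraph.Subgraph

namespace SimpleGraph

variable {V : Type*} {H : SimpleGraph V} [DecidableRel H.Adj]

theorem IsClique.card_interedges_self {S : Finset V} (hS : H.IsClique (S : Set V)) :
    #(H.interedges S S) = #S * #S - #S := by
  classical
  rw [← offDiag_card]
  congr 1
  ext ⟨x, y⟩
  simp only [mk_mem_interedges_iff, mem_offDiag]
  exact ⟨fun h => ⟨h.1, h.2.1, h.2.2.ne⟩, fun h => ⟨h.1, h.2.1, hS h.1 h.2.1 h.2.2⟩⟩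

theorem two_le_card_interedges_mk [DecidableEq V] {a b c d : V} (hab : a ≠ b) (hcd : c ≠ d)
    (h₁ : H.Adj a c ∨ H.Adj b d) (h₂ : H.Adj a d ∨ H.Adj b c) :
    2 ≤ #(H.interedges s(a, b).toFinset s(c, d).toFinset) := by
  have mem {x y : V} (hx : x ∈ s(a, b)) (hy : y ∈ s(c, d)) (hxy : H.Adj x y) :
      (x, y) ∈ H.interedges s(a, b).toFinset s(c, d).toFinset :=
    (H.mk_mem_interedges_iff).mpr ⟨Sym2.mem_toFinset.mpr hx, Sym2.mem_toFinset.mpr hy, hxy⟩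
  refine one_lt_card.mpr ?_
  rcases h₁ with h₁ | h₁ <;> rcases h₂ with h₂ | h₂
  · exact ⟨_, mem (by simp) (by simp) h₁, _, mem (by simp) (by simp) h₂, by simpa using hcd⟩
  · exact ⟨_, mem (by simp) (by simp) h₁, _, mem (by simp) (by simp) h₂, by simpa using hab⟩
  · exact ⟨_, mem (by simp) (by simp) h₁, _, mem (by simp) (by simp) h₂, by simpa using hab.symm⟩
  · exact ⟨_, mem (by simp) (by simp) h₁, _, mem (by simp) (by simp) h₂, by simpa using hcd.symm⟩

theorem mul_le_card_interedges_biUnion [DecidableEq V] {G : SimpleGraph V} {M : G.Subgraph}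
    (hM : M.IsMatching) {P Q : Finset (Sym2 V)} (hP : ↑P ⊆ M.edgeSet) (hQ : ↑Q ⊆ M.edgeSet) {k : ℕ}
    (hk : ∀ e ∈ P, ∀ f ∈ Q, k ≤ #(H.interedges e.toFinset f.toFinset)) :
    #P * #Q * k ≤ #(H.interedges (P.biUnion Sym2.toFinset) (Q.biUnion Sym2.toFinset)) := by
  rw [interedges_biUnion, card_biUnion]
  · calc #P * #Q * k = ∑ _ ∈ P ×ˢ Q, k := by simp [card_product]
      _ ≤ _ := sum_le_sum fun ef hef => hk ef.1 (mem_product.mp hef).1 ef.2 (mem_product.mp hef).2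
  · rintro ⟨e, f⟩ hef ⟨e', f'⟩ hef' hne
    simp only [coe_product, Set.mem_prod, mem_coe] at hef hef'
    refine Finset.disjoint_left.mpr fun p hp hp' => ?_
    rw [mem_interedges_iff] at hp hp'
    by_cases he : e = e'
    · subst he
      have hf : f ≠ f' := fun hf => hne (by rw [hf])
      exact Finset.disjoint_left.mp (hM.disjoint_toFinset (hQ hef.2) (hQ hef'.2) hf) hp.2.1 hp'.2.1
    · exact Finset.disjoint_left.mp (hM.disjoint_toFinset (hP hef.1) (hP hef'.1) he) hp.1 hp'.1

theorem le_card_edgeFinset_of_isClique_of_cross [Fintype V] [DecidableEq V]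
    {G : SimpleGraph V} {M : G.Subgraph} (hM : M.IsMatching)
    {P Q : Finset (Sym2 V)} (hP : ↑P ⊆ M.edgeSet) (hQ : ↑Q ⊆ M.edgeSet) (hPQ : Disjoint P Q)
    (hclique : H.IsClique (P.biUnion Sym2.toFinset : Set V))
    (hcross : ∀ e ∈ P, ∀ f ∈ Q, 2 ≤ #(H.interedges e.toFinset f.toFinset)) :
    #P * (2 * #P - 1) + 2 * #P * #Q ≤ #H.edgeFinset := by
  set S := P.biUnion Sym2.toFinset
  set T := Q.biUnion Sym2.toFinset
  have hST : Disjoint S T := hM.disjoint_biUnion_toFinset hP hQ hPQ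
  have hSS : #(H.interedges S S) = 2 * (#P * (2 * #P - 1)) := by
    rw [hclique.card_interedges_self, ← Nat.mul_sub_one, hM.card_biUnion_toFinset hP, mul_assoc]
  have hSTcard : #P * #Q * 2 ≤ #(H.interedges S T) := mul_le_card_interedges_biUnion hM hP hQ hcross
  have hTS : #(H.interedges T S) = #(H.interedges S T) :=
    haveI := H.symm
    Rel.card_interedges_comm T S
  have hdisj₁ : Disjoint (H.interedges S S) (H.interedges S T) := interedges_disjoint_right H S hST
  have hdisj₂ : Disjoint (H.interedges S S ∪ H.interedges S T) (H.interedges T S) := by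
    refine Finset.disjoint_left.mpr fun p hp hp' => ?_
    have hpS : p.1 ∈ S := by
      rcases mem_union.mp hp with hp | hp <;> exact ((H.mem_interedges_iff).mp hp).1
    exact Finset.disjoint_left.mp hST hpS ((H.mem_interedges_iff).mp hp').1
  have hsub : H.interedges S S ∪ H.interedges S T ∪ H.interedges T S ⊆
      univ.filter fun (x, y) ↦ H.Adj x y := by
    intro p hp
    simp only [mem_union, mem_interedges_iff] at hp
    simp only [mem_filter, mem_univ, true_and]
    tauto
  have hle := card_le_card hsub
  rw [card_union_of_disjoint hdisj₂, card_union_of_disjoint hdisj₁, ← two_mul_card_edgeFinset,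
    hSS, hTS] at hle
  have hcomm : 2 * #P * #Q = #P * #Q * 2 := by ring
  omega

end SimpleGraph

namespace Finset

theorem two_mul_card_filter_eq_one {α : Type*} {s : Finset α} {f : α → ℤ}
    (hf : ∀ x ∈ s, f x = 1 ∨ f x = -1) :
    2 * (#{x ∈ s | f x = 1} : ℤ) = #s + ∑ x ∈ s, f x := by
  have hplus : ∑ x ∈ s with f x = 1, f x = #{x ∈ s | f x = 1} := by
    rw [sum_congr rfl fun x hx => (mem_filter.mp hx).2]
    simp
  have hminus : ∑ x ∈ s with ¬f x = 1, f x = -#{x ∈ s | ¬f x = 1} := by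
    rw [sum_congr rfl fun x hx =>
      (hf x (mem_filter.mp hx).1).resolve_left (mem_filter.mp hx).2]
    simp
  rw [← sum_filter_add_sum_filter_not s (fun x => f x = 1), hplus, hminus,
    ← card_filter_add_card_filter_not (s := s) (fun x => f x = 1)]
  push_cast
  ring

end Finset

theorem forall_ne_neg_one_of_not_exists {V : Type*} {σ : Sym2 V → ℤ} {S : Set (Sym2 V)}
    (h : ¬∃ u₁ u₂ v₁ v₂ : V, s(u₁, u₂) ∈ S ∧ s(v₁, v₂) ∈ S ∧ s(u₁, u₂) ≠ s(v₁, v₂) ∧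
      σ s(u₁, u₂) = 1 ∧ σ s(v₁, v₂) = 1 ∧ σ s(u₁, v₁) = -1) :
    ∀ u v : V, u ≠ v → (∃ e ∈ S, σ e = 1 ∧ u ∈ e) → (∃ e ∈ S, σ e = 1 ∧ v ∈ e) →
      σ s(u, v) ≠ -1 := by
  rintro u v huv ⟨e, he, hσe, hue⟩ ⟨f, hf, hσf, hvf⟩
  obtain ⟨u', rfl⟩ := Sym2.mem_iff_exists.mp hue
  obtain ⟨v', rfl⟩ := Sym2.mem_iff_exists.mp hvf
  by_cases hef : s(u, u') = s(v, v')
  · have hu' : u' = v := by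
      rcases Sym2.eq_iff.mp hef with ⟨rfl, -⟩ | ⟨-, rfl⟩
      · exact absurd rfl huv
      · rfl
    subst hu'
    omega
  · exact fun hneg => h ⟨u, u', v, v', he, hf, hef, hσe, hσf, hneg⟩

section Signing

variable {m : ℕ} {σ : Sym2 (Fin m) → ℤ}

theorem sumE_image_sym2Map (τ : Equiv.Perm (Fin m)) (S : Set (Sym2 (Fin m))) :
    sumE σ (Sym2.map τ '' S) = ∑ e ∈ S.toFinite.toFinset, σ (Sym2.map τ e) := by
  rw [sumE, Set.Finite.toFinset_image _ S.toFinite,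
    sum_image fun x _ y _ h => Sym2.map.injective τ.injective h]

variable (σ) in
theorem exists_isPerfectMatching_sumE_eq_swap {M : (Kc m).Subgraph} (hM : M.IsPerfectMatching)
    {a b c d : Fin m} (hab : s(a, b) ∈ M.edgeSet) (hcd : s(c, d) ∈ M.edgeSet)
    (hne : s(a, b) ≠ s(c, d)) :
    ∃ N : (Kc m).Subgraph, N.IsPerfectMatching ∧
      sumE σ N.edgeSet = sumE σ M.edgeSet - σ s(a, b) - σ s(c, d) + σ s(a, c) + σ s(b, d) := by
  let f : Kc m ≃g Kc m := Iso.completeGraph (Equiv.swap b c)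
  refine ⟨M.map f.toHom, hM.map_iso f, ?_⟩
  rw [Subgraph.edgeSet_map]
  change sumE σ (Sym2.map (Equiv.swap b c) '' M.edgeSet) = _
  rw [sumE_image_sym2Map]
  exact hM.1.sum_map_swap σ (by simp) (by simpa using hab) (by simpa using hcd) hne

def plusGraph (σ : Sym2 (Fin m) → ℤ) : SimpleGraph (Fin m) :=
  fromEdgeSet {e | σ e = 1}

theorem plusGraph_adj {u v : Fin m} : (plusGraph σ).Adj u v ↔ σ s(u, v) = 1 ∧ u ≠ v :=
  fromEdgeSet_adj _

theorem sep_edgeSet_eq_edgeSet_plusGraph :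
    {e ∈ (Kc m).edgeSet | σ e = 1} = (plusGraph σ).edgeSet := by
  ext e
  simp [plusGraph, Kc, and_comm]

theorem two_mul_card_edgeFinset_plusGraph [DecidableRel (plusGraph σ).Adj]
    (hσ : ∀ e ∈ (Kc m).edgeSet, σ e = 1 ∨ σ e = -1) :
    2 * (#(plusGraph σ).edgeFinset : ℤ) = m.choose 2 + sumE σ (Kc m).edgeSet := by
  have hK : (Kc m).edgeSet.toFinite.toFinset = (⊤ : SimpleGraph (Fin m)).edgeFinset := by
    ext; simp [Kc]
  have hplus : {e ∈ (Kc m).edgeSet.toFinite.toFinset | σ e = 1} = (plusGraph σ).edgeFinset := by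
    rw [← coe_inj, coe_filter, coe_edgeFinset, ← sep_edgeSet_eq_edgeSet_plusGraph]
    simp
  rw [← hplus, two_mul_card_filter_eq_one fun e he => hσ e (by simpa using he), hK,
    card_edgeFinset_top_eq_card_choose_two, Fintype.card_fin, sumE, hK]

theorem plusGraph_adj_or_adj (hσ : ∀ e ∈ (Kc m).edgeSet, σ e = 1 ∨ σ e = -1)
    (hno : ∀ N : (Kc m).Subgraph, N.IsPerfectMatching → sumE σ N.edgeSet ≠ 0)
    {M : (Kc m).Subgraph} (hM : M.IsPerfectMatching) (hM2 : sumE σ M.edgeSet = 2)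
    {a b c d : Fin m} (hab : s(a, b) ∈ M.edgeSet) (hcd : s(c, d) ∈ M.edgeSet)
    (hσab : σ s(a, b) = 1) (hσcd : σ s(c, d) = -1) :
    (plusGraph σ).Adj a c ∨ (plusGraph σ).Adj b d := by
  have hne : s(a, b) ≠ s(c, d) := fun h => by simp [h, hσcd] at hσab
  have hac : a ≠ c := fun h => hne (hM.1.eq_of_mem_edgeSet hab hcd (v := a) (by simp) (by simp [h]))
  have hbd : b ≠ d := fun h => hne (hM.1.eq_of_mem_edgeSet hab hcd (v := b) (by simp) (by simp [h]))
  simp only [plusGraph_adj, hac, hbd, ne_eq, not_false_eq_true, and_true]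
  by_contra! hminus
  have hσac := (hσ s(a, c) (by simpa [Kc] using hac)).resolve_left hminus.1
  have hσbd := (hσ s(b, d) (by simpa [Kc] using hbd)).resolve_left hminus.2
  obtain ⟨N, hN, hNsum⟩ := exists_isPerfectMatching_sumE_eq_swap σ hM hab hcd hne
  exact hno N hN (by rw [hNsum, hM2, hσab, hσcd, hσac, hσbd]; norm_num)

theorem le_card_edgeFinset_plusGraph [DecidableRel (plusGraph σ).Adj]
    (hσ : ∀ e ∈ (Kc m).edgeSet, σ e = 1 ∨ σ e = -1)
    (hno : ∀ N : (Kc m).Subgraph, N.IsPerfectMatching → sumE σ N.edgeSet ≠ 0)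
    {M : (Kc m).Subgraph} (hM : M.IsPerfectMatching) (hM2 : sumE σ M.edgeSet = 2)
    {P Q : Finset (Sym2 (Fin m))} (hP : P = {e ∈ M.edgeSet.toFinite.toFinset | σ e = 1})
    (hQ : Q = {e ∈ M.edgeSet.toFinite.toFinset | ¬σ e = 1})
    (hplus : ∀ u v : Fin m, u ≠ v → (∃ e ∈ M.edgeSet, σ e = 1 ∧ u ∈ e) →
      (∃ e ∈ M.edgeSet, σ e = 1 ∧ v ∈ e) → σ s(u, v) ≠ -1) :
    #P * (2 * #P - 1) + 2 * #P * #Q ≤ #(plusGraph σ).edgeFinset := by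
  have hPM : ↑P ⊆ M.edgeSet := fun e he => by simp_all
  have hQM : ↑Q ⊆ M.edgeSet := fun e he => by simp_all
  refine le_card_edgeFinset_of_isClique_of_cross hM.1 hPM hQM
    (hP ▸ hQ ▸ disjoint_filter_filter_not _ _ _) ?_ ?_
  · intro u hu v hv huv
    simp only [hP, coe_biUnion, mem_coe, mem_filter, Set.Finite.mem_toFinset, Sym2.mem_toFinset,
      Set.mem_iUnion, exists_prop] at hu hv
    obtain ⟨e, ⟨he, hσe⟩, hue⟩ := hu
    obtain ⟨f, ⟨hf, hσf⟩, hvf⟩ := hv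
    refine plusGraph_adj.mpr ⟨(hσ _ ?_).resolve_right ?_, huv⟩
    · simpa [Kc] using huv
    · exact hplus u v huv ⟨e, he, hσe, hue⟩ ⟨f, hf, hσf, hvf⟩
  · intro e he f hf
    have he' : e ∈ M.edgeSet ∧ σ e = 1 := by simpa [hP] using he
    have hf' : f ∈ M.edgeSet ∧ ¬σ f = 1 := by simpa [hQ] using hf
    induction e with | _ a b =>
    induction f with | _ c d =>
    have hσcd := (hσ _ (M.edgeSet_subset hf'.1)).resolve_left hf'.2
    have hdc : s(d, c) ∈ M.edgeSet := Sym2.eq_swap ▸ hf'.1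
    refine two_le_card_interedges_mk ?_ ?_
      (plusGraph_adj_or_adj hσ hno hM hM2 he'.1 hf'.1 he'.2 hσcd)
      (plusGraph_adj_or_adj hσ hno hM hM2 he'.1 hdc he'.2 (Sym2.eq_swap ▸ hσcd))
    · simpa using (Kc m).not_isDiag_of_mem_edgeSet (M.edgeSet_subset he'.1)
    · simpa using (Kc m).not_isDiag_of_mem_edgeSet (M.edgeSet_subset hf'.1)

end Signing

theorem stmt7_general (n : ℕ) (σ : Sym2 (Fin (4*n)) → ℤ)
    (hσ : ∀ e ∈ (Kc (4*n)).edgeSet, σ e = 1 ∨ σ e = -1)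
    (hsum : sumE σ (Kc (4*n)).edgeSet = 0)
    (hno : ∀ N : (Kc (4*n)).Subgraph, N.IsPerfectMatching → sumE σ N.edgeSet ≠ 0)
    (M : (Kc (4*n)).Subgraph) (hM : M.IsPerfectMatching)
    (hM2 : sumE σ M.edgeSet = 2) :
    ((∀ u v : Fin (4*n), u ≠ v →
        (∃ e ∈ M.edgeSet, σ e = 1 ∧ u ∈ e) →
        (∃ e ∈ M.edgeSet, σ e = 1 ∧ v ∈ e) →
        σ s(u,v) ≠ -1) →
      (4*n-1)*(n+1) ≤ {e ∈ (Kc (4*n)).edgeSet | σ e = 1}.ncard) ∧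
    ∃ u1 u2 v1 v2 : Fin (4*n),
      s(u1,u2) ∈ M.edgeSet ∧ s(v1,v2) ∈ M.edgeSet ∧
      s(u1,u2) ≠ s(v1,v2) ∧
      σ s(u1,u2) = 1 ∧ σ s(v1,v2) = 1 ∧ σ s(u1,v1) = -1 := by
  classical
  set E := M.edgeSet.toFinite.toFinset
  set P := {e ∈ E | σ e = 1} with hP
  set Q := {e ∈ E | ¬σ e = 1} with hQ
  have hE : 2 * #E = 4 * n := hM.two_mul_card_edgeSet.trans (Fintype.card_fin _)
  have hPE : 2 * (#P : ℤ) = #E + 2 := by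
    rw [two_mul_card_filter_eq_one fun e he => hσ e (M.edgeSet_subset (by simpa [E] using he))]
    exact congrArg _ hM2
  have hPQ : #P + #Q = #E := card_filter_add_card_filter_not _
  have hn : 1 ≤ n := by omega
  have hPn : #P = n + 1 := by omega
  have hQn : #Q = n - 1 := by omega
  have hplus : #(plusGraph σ).edgeFinset = n * (4 * n - 1) := by
    have h := two_mul_card_edgeFinset_plusGraph hσ
    rw [hsum, add_zero, Nat.choose_two_right,
      show 4 * n * (4 * n - 1) = 2 * (2 * (n * (4 * n - 1))) by ring,
      Nat.mul_div_cancel_left _ two_pos] at h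
    omega
  have hcount : (4 * n - 1) * (n + 1) = (n + 1) * (2 * (n + 1) - 1) + 2 * (n + 1) * (n - 1) := by
    obtain ⟨k, rfl⟩ : ∃ k, n = k + 1 := ⟨n - 1, by omega⟩
    rw [show 4 * (k + 1) - 1 = 4 * k + 3 by omega, show 2 * (k + 1 + 1) - 1 = 2 * k + 3 by omega,
      Nat.add_sub_cancel]
    ring
  have hbound := le_card_edgeFinset_plusGraph hσ hno hM hM2 hP hQ
  rw [hPn, hQn, ← hcount] at hbound
  rw [sep_edgeSet_eq_edgeSet_plusGraph, ← coe_edgeFinset, Set.ncard_coe_finset]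
  refine ⟨hbound, ?_⟩
  by_contra hnot
  have hlow := hbound (forall_ne_neg_one_of_not_exists hnot)
  have hsplit : (4 * n - 1) * (n + 1) = n * (4 * n - 1) + (4 * n - 1) := by ring
  omega

theorem stmt7 (n : ℕ) (hn : 2 ≤ n) (σ : Sym2 (Fin (4*n)) → ℤ)
    (hσ : ∀ e ∈ (Kc (4*n)).edgeSet, σ e = 1 ∨ σ e = -1)
    (hsum : sumE σ (Kc (4*n)).edgeSet = 0)
    (hno : ∀ N : (Kc (4*n)).Subgraph, N.IsPerfectMatching → sumE σ N.edgeSet ≠ 0)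
    (M : (Kc (4*n)).Subgraph) (hM : M.IsPerfectMatching)
    (hmin : ∀ N : (Kc (4*n)).Subgraph, N.IsPerfectMatching →
      |sumE σ M.edgeSet| ≤ |sumE σ N.edgeSet|)
    (hM2 : sumE σ M.edgeSet = 2) :
    ((∀ u v : Fin (4*n), u ≠ v →
        (∃ e ∈ M.edgeSet, σ e = 1 ∧ u ∈ e) →
        (∃ e ∈ M.edgeSet, σ e = 1 ∧ v ∈ e) →
        σ s(u,v) ≠ -1) →
      (4*n-1)*(n+1) ≤ {e ∈ (Kc (4*n)).edgeSet | σ e = 1}.ncard) ∧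
    ∃ u1 u2 v1 v2 : Fin (4*n),
      s(u1,u2) ∈ M.edgeSet ∧ s(v1,v2) ∈ M.edgeSet ∧
      s(u1,u2) ≠ s(v1,v2) ∧
      σ s(u1,u2) = 1 ∧ σ s(v1,v2) = 1 ∧ σ s(u1,v1) = -1 :=
  stmt7_general n σ hσ hsum hno M hM hM2
end
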